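/- Fix $\vec{n}=(n_1,\ldots,n_d)$ with positive integer entries, $\mathtt N = \max_i n_i$, $\mathtt S = \sum_i n_i$, and let $\rho(x,y) = \max_i (2|x_i-y_i|)^{1/n_i}$ be the associated metric on $\mathbb{R}^d$. Let $\dim_{\mathrm{H}^*}$ denote Hausdorff dimension computed in the metric space $(\mathbb{R}^d, \rho)$, and $\dim_{\mathrm H}$ the Euclidean Hausdorff dimension. Then for every set $E \subseteq \mathbb{R}^d$, one has $\mathtt S - (d - \dim_{\mathrm H} E)\mathtt N \leq \dim_{\mathrm{H}^*} E \leq \mathtt S$. -/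

import Mathlib

open scoped ENNReal NNReal
open MeasureTheory

noncomputable section

/-- The anisotropic metric `ρ(x,y) = max_i (2|x_i - y_i|)^{1/n_i}`. -/
def rho (d : ℕ) (n : Fin d → ℕ) (x y : Fin d → ℝ) : ℝ :=
  ⨆ i, (2 * |x i - y i|) ^ ((n i : ℝ)⁻¹)

/-- The `ρ`-diameter of a set, as an extended nonnegative real. -/
def rhoDiam (d : ℕ) (n : Fin d → ℕ) (U : Set (Fin d → ℝ)) : ℝ≥0∞ :=
  ⨆ x ∈ U, ⨆ y ∈ U, ENNReal.ofReal (rho d n x y)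

/-- The `s`-dimensional Hausdorff measure in the metric space `(ℝ^d, ρ)`. -/
def rhoHaus (d : ℕ) (n : Fin d → ℕ) (s : ℝ≥0) (E : Set (Fin d → ℝ)) : ℝ≥0∞ :=
  ⨆ (δ : ℝ≥0∞) (_ : 0 < δ),
    ⨅ (U : ℕ → Set (Fin d → ℝ)) (_ : E ⊆ ⋃ k, U k) (_ : ∀ k, rhoDiam d n (U k) ≤ δ),
      ∑' k, rhoDiam d n (U k) ^ (s : ℝ)

/-- Hausdorff dimension computed in the metric space `(ℝ^d, ρ)`. -/
def rhoDimH (d : ℕ) (n : Fin d → ℕ) (E : Set (Fin d → ℝ)) : ℝ≥0∞ :=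
  ⨆ (s : ℝ≥0) (_ : rhoHaus d n s E = ⊤), (s : ℝ≥0∞)

variable {d : ℕ} {n : Fin d → ℕ}


lemma rho_le (hd : 0 < d) {x y : Fin d → ℝ} {a : ℝ}
    (h : ∀ i, (2 * |x i - y i|) ^ ((n i : ℝ)⁻¹) ≤ a) : rho d n x y ≤ a := by
  have : Nonempty (Fin d) := Fin.pos_iff_nonempty.mp hd
  exact ciSup_le h

lemma coord_le_of_rho_le (hn : ∀ i, 1 ≤ n i) {x y : Fin d → ℝ} {a : ℝ}
    (h : rho d n x y ≤ a) (i : Fin d) : 2 * |x i - y i| ≤ a ^ (n i) := by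
  have h0 : (0:ℝ) ≤ 2 * |x i - y i| := by positivity
  have hni : (0:ℝ) < (n i : ℝ) := by exact_mod_cast (hn i)
  have hterm : (2 * |x i - y i|) ^ ((n i : ℝ)⁻¹) ≤ a := by
    refine le_trans ?_ h
    exact le_ciSup (f := fun i => (2 * |x i - y i|) ^ ((n i : ℝ)⁻¹))
      (Set.Finite.bddAbove (Set.finite_range _)) i
  have key := Real.rpow_le_rpow (Real.rpow_nonneg h0 _) hterm (le_of_lt hni)
  rw [← Real.rpow_mul h0, inv_mul_cancel₀ hni.ne', Real.rpow_one, Real.rpow_natCast] at key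
  exact key

lemma rho_le_of_coords (hd : 0 < d) (hn : ∀ i, 1 ≤ n i) {x y : Fin d → ℝ} {r : ℝ} (hr : 0 ≤ r)
    (h : ∀ i, 2 * |x i - y i| ≤ r ^ (n i)) : rho d n x y ≤ r := by
  refine rho_le hd fun i => ?_
  have h0 : (0:ℝ) ≤ 2 * |x i - y i| := by positivity
  have hni : ((n i : ℝ)) ≠ 0 := by
    have := hn i; positivity
  calc (2 * |x i - y i|) ^ ((n i : ℝ)⁻¹) ≤ (r ^ (n i)) ^ ((n i : ℝ)⁻¹) :=
        Real.rpow_le_rpow h0 (h i) (by positivity)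
    _ = r := by
        rw [← Real.rpow_natCast r (n i), ← Real.rpow_mul hr, mul_inv_cancel₀ hni, Real.rpow_one]

lemma rhoDiam_le {U : Set (Fin d → ℝ)} {a : ℝ≥0∞}
    (h : ∀ x ∈ U, ∀ y ∈ U, ENNReal.ofReal (rho d n x y) ≤ a) : rhoDiam d n U ≤ a :=
  iSup₂_le fun x hx => iSup₂_le fun y hy => h x hx y hy

lemma le_rhoDiam {U : Set (Fin d → ℝ)} {x y : Fin d → ℝ} (hx : x ∈ U) (hy : y ∈ U) :
    ENNReal.ofReal (rho d n x y) ≤ rhoDiam d n U :=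
  le_trans (le_iSup₂ (f := fun y (_ : y ∈ U) => ENNReal.ofReal (rho d n x y)) y hy)
    (le_iSup₂ (f := fun x (_ : x ∈ U) => ⨆ y ∈ U, ENNReal.ofReal (rho d n x y)) x hx)

lemma rhoDiam_empty : rhoDiam d n ∅ = 0 := by simp [rhoDiam]

def gridCube {d : ℕ} (a c : Fin d → ℝ) (w : Fin d → ℕ) : Set (Fin d → ℝ) :=
  {y | ∀ i, y i ∈ Set.Icc (a i + w i * c i) (a i + (w i + 1) * c i)}

lemma mem_gridCube_floor {d : ℕ} {a c y : Fin d → ℝ} (hc : ∀ i, 0 < c i) (h : ∀ i, a i ≤ y i) :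
    y ∈ gridCube a c (fun i => ⌊(y i - a i) / c i⌋₊) := by
  intro i
  have hu : 0 ≤ (y i - a i) / c i := div_nonneg (by linarith [h i]) (hc i).le
  constructor
  · have h1 := Nat.floor_le hu
    have h2 : (⌊(y i - a i) / c i⌋₊ : ℝ) * c i ≤ y i - a i := by
      rw [← le_div_iff₀ (hc i)]; exact h1
    linarith
  · have h1 := Nat.lt_floor_add_one ((y i - a i) / c i)
    have h2 : y i - a i < ((⌊(y i - a i) / c i⌋₊ : ℝ) + 1) * c i := by
      rw [← div_lt_iff₀ (hc i)]; exact h1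
    linarith

lemma gridCube_coord {d : ℕ} {a c : Fin d → ℝ} {w : Fin d → ℕ} {x y : Fin d → ℝ}
    (hx : x ∈ gridCube a c w) (hy : y ∈ gridCube a c w) (i : Fin d) :
    |x i - y i| ≤ c i := by
  have h1 := hx i; have h2 := hy i
  simp only [Set.mem_Icc] at h1 h2
  rw [abs_le]
  exact ⟨by linarith, by linarith⟩

variable {d : ℕ} {n : Fin d → ℕ}

lemma rhoHaus_ne_top_of_S_lt (hd : 0 < d) (hn : ∀ i, 1 ≤ n i) {S : ℕ} (hS : S = ∑ i, n i)
    {s : ℝ≥0} (hs : (S : ℝ) < (s : ℝ)) (E : Set (Fin d → ℝ)) :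
    rhoHaus d n s E ≠ ⊤ := by
  have hne : Nonempty (Fin d) := Fin.pos_iff_nonempty.mp hd
  have hS1 : 1 ≤ S := by
    rw [hS]
    calc 1 ≤ d := hd
    _ = ∑ _i : Fin d, 1 := by simp
    _ ≤ ∑ i, n i := Finset.sum_le_sum fun i _ => hn i
  have hs0 : (0:ℝ) < (s:ℝ) := lt_of_le_of_lt (by positivity) hs
  set t : ℝ := (s:ℝ) - S with ht_def
  have ht : 0 < t := by simp only [ht_def]; linarith
  have hratio : ENNReal.ofReal ((2:ℝ) ^ (-t)) < 1 := by
    rw [← ENNReal.ofReal_one]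
    exact ENNReal.ofReal_lt_ofReal_iff_of_nonneg (by positivity) |>.mpr
      (Real.rpow_lt_one_of_one_lt_of_neg one_lt_two (by linarith))
  set C : ℝ≥0∞ := ENNReal.ofReal ((2:ℝ) ^ ((s:ℝ))) * (1 - ENNReal.ofReal ((2:ℝ) ^ (-t)))⁻¹
    with hC_def
  have hC : C ≠ ⊤ := by
    apply ENNReal.mul_ne_top ENNReal.ofReal_ne_top
    rw [Ne, ENNReal.inv_eq_top]
    exact (tsub_pos_of_lt hratio).ne'
  refine ne_top_of_le_ne_top hC ?_
  rw [rhoHaus]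
  refine iSup₂_le fun δ hδ => ?_
  obtain ⟨K, hK1, hKδ⟩ : ∃ K : ℕ, 1 ≤ K ∧ ENNReal.ofReal (2 / K) ≤ δ := by
    rcases eq_or_ne δ ⊤ with h | h
    · exact ⟨1, le_refl _, h ▸ le_top⟩
    · have hδ' : 0 < δ.toReal := ENNReal.toReal_pos hδ.ne' h
      obtain ⟨K, hK⟩ := exists_nat_ge (2 / δ.toReal)
      refine ⟨K + 1, le_add_self, ?_⟩
      have hK1 : (0:ℝ) < ((K+1:ℕ):ℝ) := by positivity
      have hle : 2 / ((K+1:ℕ):ℝ) ≤ δ.toReal := by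
        rw [div_le_iff₀ hK1]
        rw [div_le_iff₀ hδ'] at hK
        calc (2:ℝ) ≤ K * δ.toReal := hK
          _ ≤ δ.toReal * ((K+1:ℕ):ℝ) := by push_cast; nlinarith
      calc ENNReal.ofReal (2 / ((K+1:ℕ):ℝ)) ≤ ENNReal.ofReal δ.toReal :=
            ENNReal.ofReal_le_ofReal hle
        _ = δ := ENNReal.ofReal_toReal h
  obtain ⟨g, hg⟩ := exists_injective_nat (Fin d → ℤ)
  set k : (Fin d → ℤ) → ℕ := fun z => K * 2 ^ (g z) with hk_def
  have hk1 : ∀ z, 1 ≤ k z := fun z => Nat.mul_pos hK1 (Nat.two_pow_pos _)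
  have hkK : ∀ z, K ≤ k z := fun z =>
    Nat.le_mul_of_pos_right K (by positivity : 0 < 2 ^ (g z))
  have hkR : ∀ z, (0:ℝ) < (k z : ℝ) := fun z => by exact_mod_cast hk1 z
  set V : (Fin d → ℤ) × (Fin d → ℕ) → Set (Fin d → ℝ) := fun p =>
    if ∀ i, p.2 i < (k p.1) ^ (n i) then
      gridCube (fun i => (p.1 i : ℝ)) (fun i => (((k p.1 : ℝ)) ^ (n i))⁻¹) p.2
    else ∅ with hV_def
  haveI : Infinite (Fin d → ℕ) :=
    Infinite.of_injective (fun m _ => m) (fun a b hab => congrFun hab (Classical.arbitrary _))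
  haveI := (nonempty_denumerable ((Fin d → ℤ) × (Fin d → ℕ))).some
  set e : ℕ ≃ ((Fin d → ℤ) × (Fin d → ℕ)) := (Denumerable.eqv _).symm with he_def
  have hdiam : ∀ p, rhoDiam d n (V p) ≤ ENNReal.ofReal (2 / (k p.1)) := by
    intro p
    by_cases hvalid : ∀ i, p.2 i < (k p.1) ^ (n i)
    · rw [hV_def]; simp only [if_pos hvalid]
      refine rhoDiam_le fun x hx y hy => ENNReal.ofReal_le_ofReal ?_
      refine rho_le_of_coords hd hn (by positivity) fun i => ?_
      have hco := gridCube_coord hx hy i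
      calc 2 * |x i - y i| ≤ 2 * ((k p.1 : ℝ) ^ (n i))⁻¹ := by linarith
        _ ≤ (2:ℝ) ^ (n i) * ((k p.1 : ℝ) ^ (n i))⁻¹ := by
            have h2 : (2:ℝ) ≤ 2 ^ (n i) := by
              calc (2:ℝ) = 2 ^ 1 := (pow_one 2).symm
              _ ≤ 2 ^ (n i) := pow_le_pow_right₀ one_le_two (hn i)
            have hp : (0:ℝ) < ((k p.1 : ℝ) ^ (n i))⁻¹ := by positivity
            nlinarith
        _ = (2 / (k p.1 : ℝ)) ^ (n i) := by rw [div_pow]; ring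
    · rw [hV_def]; simp only [if_neg hvalid]
      simp [rhoDiam_empty]
  have hdiamδ : ∀ p, rhoDiam d n (V p) ≤ δ := by
    intro p
    refine le_trans (hdiam p) (le_trans ?_ hKδ)
    apply ENNReal.ofReal_le_ofReal
    have hKR : (0:ℝ) < (K:ℝ) := by exact_mod_cast hK1
    apply div_le_div_of_nonneg_left (by norm_num) hKR
    exact_mod_cast hkK p.1
  have hcover : E ⊆ ⋃ m, V (e m) := by
    have h1 : (⋃ m, V (e m)) = ⋃ p, V p := e.surjective.iUnion_comp V
    rw [h1]
    intro x _
    set z : Fin d → ℤ := fun i => ⌊x i⌋ with hz_def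
    set c : Fin d → ℝ := fun i => (((k z : ℝ)) ^ (n i))⁻¹ with hc_def
    have hc : ∀ i, 0 < c i := fun i => by rw [hc_def]; positivity
    set w : Fin d → ℕ := fun i => ⌊(x i - (z i : ℝ)) / c i⌋₊ with hw_def
    have hmem : x ∈ gridCube (fun i => (z i : ℝ)) c w :=
      mem_gridCube_floor hc fun i => Int.floor_le (x i)
    have hwlt : ∀ i, w i < (k z) ^ (n i) := by
      intro i
      have hA : (0:ℝ) < (k z : ℝ) ^ (n i) := by positivity
      have hu0 : (0:ℝ) ≤ x i - (z i : ℝ) := sub_nonneg.mpr (Int.floor_le (x i))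
      have hlt : x i - (z i : ℝ) < 1 := by
        have := Int.lt_floor_add_one (x i)
        have hz : (z i : ℝ) = (⌊x i⌋ : ℝ) := by rw [hz_def]
        rw [hz]; linarith
      have h1 : (x i - (z i : ℝ)) / c i < ((k z ^ (n i) : ℕ) : ℝ) := by
        rw [hc_def]
        simp only [div_eq_mul_inv, inv_inv]
        push_cast
        nlinarith
      exact Nat.floor_lt (div_nonneg hu0 (hc i).le) |>.mpr h1
    refine Set.mem_iUnion.mpr ⟨(z, w), ?_⟩
    rw [hV_def]
    simp only [if_pos hwlt]
    exact hmem
  have hinner : ∀ z : Fin d → ℤ,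
      (∑' w : Fin d → ℕ, rhoDiam d n (V (z, w)) ^ ((s:ℝ))) ≤
        ENNReal.ofReal ((2:ℝ) ^ ((s:ℝ)) * ((2:ℝ) ^ (-t)) ^ (g z)) := by
    intro z
    set A : ℝ := (k z : ℝ) with hA_def
    have hA : 0 < A := hkR z
    have hterm : ∀ w : Fin d → ℕ, rhoDiam d n (V (z, w)) ^ ((s:ℝ)) ≤
        (if ∀ i, w i < (k z) ^ (n i) then ENNReal.ofReal ((2/A) ^ ((s:ℝ))) else 0) := by
      intro w
      by_cases hv : ∀ i, w i < (k z) ^ (n i)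
      · rw [if_pos hv]
        calc rhoDiam d n (V (z, w)) ^ ((s:ℝ)) ≤ (ENNReal.ofReal (2 / A)) ^ ((s:ℝ)) :=
              ENNReal.rpow_le_rpow (hdiam (z, w)) hs0.le
          _ = ENNReal.ofReal ((2/A) ^ ((s:ℝ))) :=
              ENNReal.ofReal_rpow_of_pos (by positivity)
      · have hVe : V (z, w) = ∅ := by rw [hV_def]; simp only [if_neg hv]
        rw [if_neg hv, hVe, rhoDiam_empty, ENNReal.zero_rpow_of_pos hs0]
    calc (∑' w : Fin d → ℕ, rhoDiam d n (V (z, w)) ^ ((s:ℝ)))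
        ≤ ∑' w : Fin d → ℕ,
            (if ∀ i, w i < (k z) ^ (n i) then ENNReal.ofReal ((2/A) ^ ((s:ℝ))) else 0) :=
          ENNReal.tsum_le_tsum hterm
      _ = ∑ w ∈ Fintype.piFinset (fun i => Finset.range ((k z) ^ (n i))),
            (if ∀ i, w i < (k z) ^ (n i) then ENNReal.ofReal ((2/A) ^ ((s:ℝ))) else 0) := by
          refine tsum_eq_sum fun w hw => if_neg ?_
          simpa [Fintype.mem_piFinset] using hw
      _ = ∑ w ∈ Fintype.piFinset (fun i => Finset.range ((k z) ^ (n i))),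
            ENNReal.ofReal ((2/A) ^ ((s:ℝ))) := by
          refine Finset.sum_congr rfl fun w hw => if_pos ?_
          simpa [Fintype.mem_piFinset] using hw
      _ = ((k z) ^ S : ℕ) * ENNReal.ofReal ((2/A) ^ ((s:ℝ))) := by
          rw [Finset.sum_const, Fintype.card_piFinset]
          simp only [Finset.card_range]
          rw [Finset.prod_pow_eq_pow_sum, ← hS, nsmul_eq_mul]
      _ ≤ ENNReal.ofReal ((2:ℝ) ^ ((s:ℝ)) * ((2:ℝ) ^ (-t)) ^ (g z)) := by
          rw [← ENNReal.ofReal_natCast ((k z) ^ S), ← ENNReal.ofReal_mul (by positivity)]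
          apply ENNReal.ofReal_le_ofReal
          push_cast
          have h2A : (2:ℝ) ^ (g z) ≤ A := by
            rw [hA_def, hk_def]
            push_cast
            nlinarith [pow_pos (by norm_num : (0:ℝ) < 2) (g z),
              (by exact_mod_cast hK1 : (1:ℝ) ≤ (K:ℝ))]
          have key : A ^ (S:ℕ) * (2 / A) ^ ((s:ℝ)) = 2 ^ ((s:ℝ)) * A ^ (-t) := by
            rw [Real.div_rpow (by norm_num) hA.le]
            calc A ^ (S:ℕ) * (2 ^ ((s:ℝ)) / A ^ ((s:ℝ)))
                = 2 ^ ((s:ℝ)) * (A ^ ((S:ℝ)) * (A ^ ((s:ℝ)))⁻¹) := by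
                  rw [← Real.rpow_natCast A S]; ring
              _ = 2 ^ ((s:ℝ)) * A ^ ((S:ℝ) + (-(s:ℝ))) := by
                  rw [← Real.rpow_neg hA.le, ← Real.rpow_add hA]
              _ = 2 ^ ((s:ℝ)) * A ^ (-t) := by
                  congr 1
                  rw [ht_def]; ring_nf
          rw [key]
          have hmono : A ^ (-t) ≤ ((2:ℝ) ^ (g z)) ^ (-t) :=
            Real.rpow_le_rpow_of_nonpos (by positivity) h2A (by linarith)
          have hexp : ((2:ℝ) ^ (g z)) ^ (-t) = ((2:ℝ) ^ (-t)) ^ (g z) := by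
            rw [← Real.rpow_natCast ((2:ℝ) ^ (-t)) (g z), ← Real.rpow_natCast (2:ℝ) (g z),
              ← Real.rpow_mul (by norm_num), ← Real.rpow_mul (by norm_num), mul_comm]
          have h2s : (0:ℝ) ≤ 2 ^ ((s:ℝ)) := by positivity
          rw [← hexp]
          exact mul_le_mul_of_nonneg_left hmono h2s
  calc (⨅ (U : ℕ → Set (Fin d → ℝ)) (_ : E ⊆ ⋃ m, U m) (_ : ∀ m, rhoDiam d n (U m) ≤ δ),
          ∑' m, rhoDiam d n (U m) ^ ((s:ℝ)))
      ≤ ∑' m, rhoDiam d n (V (e m)) ^ ((s:ℝ)) := by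
        refine iInf_le_of_le (fun m => V (e m)) ?_
        exact iInf_le_of_le hcover (iInf_le_of_le (fun m => hdiamδ (e m)) le_rfl)
    _ = ∑' p, rhoDiam d n (V p) ^ ((s:ℝ)) := e.tsum_eq (fun p => rhoDiam d n (V p) ^ ((s:ℝ)))
    _ = ∑' (z : Fin d → ℤ) (w : Fin d → ℕ), rhoDiam d n (V (z, w)) ^ ((s:ℝ)) :=
        ENNReal.tsum_prod (f := fun z w => rhoDiam d n (V (z, w)) ^ ((s:ℝ)))
    _ ≤ ∑' (z : Fin d → ℤ), ENNReal.ofReal ((2:ℝ) ^ ((s:ℝ)) * ((2:ℝ) ^ (-t)) ^ (g z)) :=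
        ENNReal.tsum_le_tsum hinner
    _ ≤ ∑' (m : ℕ), ENNReal.ofReal ((2:ℝ) ^ ((s:ℝ)) * ((2:ℝ) ^ (-t)) ^ m) :=
        ENNReal.tsum_comp_le_tsum_of_injective hg _
    _ = C := by
        simp_rw [ENNReal.ofReal_mul (by positivity : (0:ℝ) ≤ (2:ℝ) ^ ((s:ℝ))),
          ENNReal.ofReal_pow (by positivity : (0:ℝ) ≤ (2:ℝ) ^ (-t))]
        rw [ENNReal.tsum_mul_left, ENNReal.tsum_geometric, hC_def]

-- elementary real inequality
lemma rpow_add_le {a b s : ℝ} (ha : 0 ≤ a) (hb : 0 ≤ b) (hs : 0 ≤ s) :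
    (a + b) ^ s ≤ 2 ^ s * (a ^ s + b ^ s) := by
  have hm : a + b ≤ 2 * max a b := by
    rcases le_total a b with h | h
    · rw [max_eq_right h]; linarith
    · rw [max_eq_left h]; linarith
  have h1 : (a + b) ^ s ≤ (2 * max a b) ^ s :=
    Real.rpow_le_rpow (by linarith) hm hs
  have h2 : (2 * max a b) ^ s = 2 ^ s * (max a b) ^ s :=
    Real.mul_rpow (by norm_num) (le_max_iff.mpr (Or.inl ha))
  have h3 : (max a b) ^ s ≤ a ^ s + b ^ s := by
    rcases le_total a b with h | h
    · rw [max_eq_right h]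
      have : (0:ℝ) ≤ a ^ s := Real.rpow_nonneg ha s
      linarith
    · rw [max_eq_left h]
      have : (0:ℝ) ≤ b ^ s := Real.rpow_nonneg hb s
      linarith
  calc (a + b) ^ s ≤ 2 ^ s * (max a b) ^ s := by rw [← h2]; exact h1
    _ ≤ 2 ^ s * (a ^ s + b ^ s) := by
        have : (0:ℝ) ≤ 2 ^ s := Real.rpow_nonneg (by norm_num) s
        nlinarith

lemma rhoHaus_eq_top_of_lt (hd : 0 < d) (hn : ∀ i, 1 ≤ n i) {N S : ℕ}
    (hNmax : ∀ i, n i ≤ N) (hN1 : 1 ≤ N) (hS : S = ∑ i, n i)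
    {E : Set (Fin d → ℝ)} {t : ℝ≥0} (ht0 : 0 < (t:ℝ)) (htd : (t:ℝ≥0∞) < dimH E)
    {s : ℝ≥0} (hs0 : 0 < (s:ℝ)) (hsle : (s:ℝ) ≤ (S:ℝ) - ((d:ℝ) - t) * N) :
    rhoHaus d n s E = ⊤ := by
  classical
  by_contra hM
  set M := rhoHaus d n s E with hM_def
  have hμ : μH[(t:ℝ≥0)] E = ⊤ := hausdorffMeasure_of_lt_dimH htd
  -- scales
  set δ' : ℕ → ℝ := fun j => (2⁻¹:ℝ) ^ j * 4⁻¹ with hδ'_def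
  have hδ'pos : ∀ j, 0 < δ' j := fun j => by rw [hδ'_def]; positivity
  have hδ'le : ∀ j, δ' j ≤ 4⁻¹ := fun j => by
    rw [hδ'_def]
    have h1 : (2⁻¹:ℝ) ^ j ≤ 1 := pow_le_one₀ (by norm_num) (by norm_num)
    nlinarith
  -- pick covers
  have H : ∀ j : ℕ, ∃ U : ℕ → Set (Fin d → ℝ), (E ⊆ ⋃ k, U k) ∧
      (∀ k, rhoDiam d n (U k) ≤ ENNReal.ofReal (δ' j)) ∧
      (∑' k, rhoDiam d n (U k) ^ (s:ℝ)) < M + 1 := by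
    intro j
    have hpos : (0:ℝ≥0∞) < ENNReal.ofReal (δ' j) := ENNReal.ofReal_pos.mpr (hδ'pos j)
    have hinf : (⨅ (U : ℕ → Set (Fin d → ℝ)) (_ : E ⊆ ⋃ k, U k)
        (_ : ∀ k, rhoDiam d n (U k) ≤ ENNReal.ofReal (δ' j)),
        ∑' k, rhoDiam d n (U k) ^ (s:ℝ)) ≤ M := by
      rw [hM_def, rhoHaus]
      exact le_iSup₂ (f := fun δ (_ : 0 < δ) => ⨅ (U : ℕ → Set (Fin d → ℝ))
        (_ : E ⊆ ⋃ k, U k) (_ : ∀ k, rhoDiam d n (U k) ≤ δ),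
        ∑' k, rhoDiam d n (U k) ^ (s:ℝ)) (ENNReal.ofReal (δ' j)) hpos
    have hlt : (⨅ (U : ℕ → Set (Fin d → ℝ)) (_ : E ⊆ ⋃ k, U k)
        (_ : ∀ k, rhoDiam d n (U k) ≤ ENNReal.ofReal (δ' j)),
        ∑' k, rhoDiam d n (U k) ^ (s:ℝ)) < M + 1 :=
      lt_of_le_of_lt hinf (ENNReal.lt_add_right hM one_ne_zero)
    simp only [iInf_lt_iff] at hlt
    obtain ⟨U, hU1, hU2, hU3⟩ := hlt
    exact ⟨U, hU1, hU2, hU3⟩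
  choose U hUcov hUsm hUsum using H
  -- data
  set D : ℕ → ℕ → ℝ := fun j k => (rhoDiam d n (U j k)).toReal with hD_def
  have hDtop : ∀ j k, rhoDiam d n (U j k) ≠ ⊤ := fun j k =>
    ne_top_of_le_ne_top ENNReal.ofReal_ne_top (hUsm j k)
  have hD0 : ∀ j k, 0 ≤ D j k := fun j k => ENNReal.toReal_nonneg
  have hDle : ∀ j k, D j k ≤ δ' j := fun j k =>
    ENNReal.toReal_le_of_le_ofReal (hδ'pos j).le (hUsm j k)
  set r : ℕ → ℕ → ℝ := fun j k => D j k + δ' j * 2⁻¹ ^ (k + 1) with hr_def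
  have hr0 : ∀ j k, 0 < r j k := fun j k => by
    have := hD0 j k; have := hδ'pos j; rw [hr_def]; dsimp only; positivity
  have hrle : ∀ j k, r j k ≤ 2 * δ' j := by
    intro j k
    have h1 : δ' j * 2⁻¹ ^ (k+1) ≤ δ' j := by
      have h2 : (2⁻¹:ℝ) ^ (k+1) ≤ 1 := pow_le_one₀ (by norm_num) (by norm_num)
      nlinarith [hδ'pos j]
    have := hDle j k
    rw [hr_def]; dsimp only; linarith
  have hr1 : ∀ j k, r j k ≤ 1 := fun j k =>
    le_trans (hrle j k) (by nlinarith [hδ'le j])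
  set c : ℕ → ℕ → ℝ := fun j k => r j k ^ N with hc_def
  have hc0 : ∀ j k, 0 < c j k := fun j k => by rw [hc_def]; dsimp only; positivity
  have hcr : ∀ j k, c j k ≤ r j k := fun j k => by
    rw [hc_def]; dsimp only
    calc r j k ^ N ≤ r j k ^ 1 := pow_le_pow_of_le_one (hr0 j k).le (hr1 j k) hN1
      _ = r j k := pow_one _
  -- anchor points
  set x0 : ℕ → ℕ → (Fin d → ℝ) := fun j k =>
    if h : (U j k).Nonempty then h.some else 0 with hx0_def
  set a : ℕ → ℕ → (Fin d → ℝ) := fun j k i => x0 j k i - r j k ^ (n i) / 2 with ha_def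
  set Mc : ℕ → ℕ → Fin d → ℕ := fun j k i => ⌊r j k ^ (n i) / c j k⌋₊ with hMc_def
  -- the refined covers
  set V : ℕ → ℕ × (Fin d → ℕ) → Set (Fin d → ℝ) := fun j p =>
    if (U j p.1).Nonempty ∧ ∀ i, p.2 i ≤ Mc j p.1 i then
      gridCube (a j p.1) (fun _ => c j p.1) p.2
    else ∅ with hV_def
  -- key coordinate bound for points of `U j k`
  have hcoord : ∀ j k, ∀ y ∈ U j k, (U j k).Nonempty → ∀ i,
      |y i - x0 j k i| ≤ r j k ^ (n i) / 2 := by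
    intro j k y hy h i
    have hx0m : x0 j k ∈ U j k := by
      rw [hx0_def]; dsimp only; rw [dif_pos h]; exact h.some_mem
    have h1 : ENNReal.ofReal (rho d n (x0 j k) y) ≤ rhoDiam d n (U j k) :=
      le_rhoDiam hx0m hy
    have h2 : rho d n (x0 j k) y ≤ D j k := by
      have h3 : ENNReal.ofReal (rho d n (x0 j k) y) ≤ ENNReal.ofReal (D j k) := by
        rw [hD_def]; dsimp only
        rw [ENNReal.ofReal_toReal (hDtop j k)]
        exact h1
      exact (ENNReal.ofReal_le_ofReal_iff (hD0 j k)).mp h3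
    have h4 : 2 * |x0 j k i - y i| ≤ D j k ^ (n i) := coord_le_of_rho_le hn h2 i
    have h5 : D j k ^ (n i) ≤ r j k ^ (n i) := by
      apply pow_le_pow_left₀ (hD0 j k)
      rw [hr_def]; dsimp only
      have : 0 < δ' j * 2⁻¹ ^ (k+1) := by positivity
      linarith
    rw [abs_sub_comm]
    linarith [h4, h5]
  -- cover property
  have hcoverV : ∀ j, E ⊆ ⋃ p, V j p := by
    intro j x hx
    obtain ⟨k, hk⟩ := Set.mem_iUnion.mp (hUcov j hx)
    have hne : (U j k).Nonempty := ⟨x, hk⟩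
    have hxc := hcoord j k x hk hne
    have hax : ∀ i, a j k i ≤ x i := by
      intro i
      have := abs_le.mp (hxc i)
      rw [ha_def]; dsimp only; linarith [this.1]
    set w : Fin d → ℕ := fun i => ⌊(x i - a j k i) / c j k⌋₊ with hw_def
    have hmem : x ∈ gridCube (a j k) (fun _ => c j k) w :=
      mem_gridCube_floor (fun _ => hc0 j k) hax
    have hwle : ∀ i, w i ≤ Mc j k i := by
      intro i
      rw [hw_def, hMc_def]; dsimp only
      apply Nat.floor_mono
      have hnum : x i - a j k i ≤ r j k ^ (n i) := by
        have := abs_le.mp (hxc i)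
        rw [ha_def]; dsimp only; linarith [this.2]
      exact div_le_div_of_nonneg_right hnum (hc0 j k).le

    refine Set.mem_iUnion.mpr ⟨(k, w), ?_⟩
    rw [hV_def]; dsimp only
    rw [if_pos ⟨hne, hwle⟩]
    exact hmem
  -- diameter bounds
  have hdiamV : ∀ j p, EMetric.diam (V j p) ≤ ENNReal.ofReal (c j p.1) := by
    intro j p
    rw [hV_def]; dsimp only
    split_ifs with hcond
    · refine EMetric.diam_le fun x hx y hy => ?_
      rw [edist_dist]
      apply ENNReal.ofReal_le_ofReal
      rw [dist_pi_le_iff (hc0 j p.1).le]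
      intro i
      rw [Real.dist_eq]
      exact gridCube_coord hx hy i
    · simp [EMetric.diam]
  have hdiamV2 : ∀ j p, EMetric.diam (V j p) ≤ ENNReal.ofReal (2 * δ' j) := by
    intro j p
    refine le_trans (hdiamV j p) (ENNReal.ofReal_le_ofReal ?_)
    exact le_trans (hcr j p.1) (hrle j p.1)
  -- inner sum bound
  have hinner : ∀ j k, (∑' w : Fin d → ℕ, EMetric.diam (V j (k, w)) ^ ((t:ℝ))) ≤
      ENNReal.ofReal ((2:ℝ) ^ d * r j k ^ ((s:ℝ))) := by
    intro j k
    by_cases hne : (U j k).Nonempty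
    · have hterm : ∀ w : Fin d → ℕ, EMetric.diam (V j (k, w)) ^ ((t:ℝ)) ≤
          (if ∀ i, w i ≤ Mc j k i then ENNReal.ofReal (c j k ^ ((t:ℝ))) else 0) := by
        intro w
        by_cases hv : ∀ i, w i ≤ Mc j k i
        · rw [if_pos hv]
          calc EMetric.diam (V j (k, w)) ^ ((t:ℝ))
              ≤ (ENNReal.ofReal (c j k)) ^ ((t:ℝ)) :=
                ENNReal.rpow_le_rpow (hdiamV j (k, w)) ht0.le
            _ = ENNReal.ofReal (c j k ^ ((t:ℝ))) :=
                ENNReal.ofReal_rpow_of_pos (hc0 j k)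
        · have hVe : V j (k, w) = ∅ := by
            rw [hV_def]; dsimp only
            rw [if_neg (by intro hc; exact hv hc.2)]
          rw [if_neg hv, hVe, EMetric.diam, EMetric.diam_empty, ENNReal.zero_rpow_of_pos ht0]
      calc (∑' w : Fin d → ℕ, EMetric.diam (V j (k, w)) ^ ((t:ℝ)))
          ≤ ∑' w : Fin d → ℕ,
              (if ∀ i, w i ≤ Mc j k i then ENNReal.ofReal (c j k ^ ((t:ℝ))) else 0) :=
            ENNReal.tsum_le_tsum hterm
        _ = ∑ w ∈ Fintype.piFinset (fun i => Finset.range (Mc j k i + 1)),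
              (if ∀ i, w i ≤ Mc j k i then ENNReal.ofReal (c j k ^ ((t:ℝ))) else 0) := by
            refine tsum_eq_sum fun w hw => if_neg ?_
            simpa [Fintype.mem_piFinset, Nat.lt_succ_iff] using hw
        _ = ∑ w ∈ Fintype.piFinset (fun i => Finset.range (Mc j k i + 1)),
              ENNReal.ofReal (c j k ^ ((t:ℝ))) := by
            refine Finset.sum_congr rfl fun w hw => if_pos ?_
            simpa [Fintype.mem_piFinset, Nat.lt_succ_iff] using hw
        _ = ((∏ i, (Mc j k i + 1) : ℕ) : ℝ≥0∞) * ENNReal.ofReal (c j k ^ ((t:ℝ))) := by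
            rw [Finset.sum_const, Fintype.card_piFinset]
            simp only [Finset.card_range, nsmul_eq_mul]
        _ ≤ ENNReal.ofReal ((2:ℝ) ^ d * r j k ^ ((s:ℝ))) := by
            rw [← ENNReal.ofReal_natCast, ← ENNReal.ofReal_mul (by positivity)]
            apply ENNReal.ofReal_le_ofReal
            -- real-number estimate
            have hr := hr0 j k
            have hr1' := hr1 j k
            have hcpos := hc0 j k
            have hfac : ∀ i : Fin d, ((Mc j k i + 1 : ℕ) : ℝ) ≤ 2 * (r j k ^ (n i) / c j k) := by
              intro i
              have h1 : (Mc j k i : ℝ) ≤ r j k ^ (n i) / c j k := by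
                rw [hMc_def]; dsimp only
                exact Nat.floor_le (by positivity)
              have h2 : (1:ℝ) ≤ r j k ^ (n i) / c j k := by
                rw [le_div_iff₀ hcpos, one_mul, hc_def]; dsimp only
                exact pow_le_pow_of_le_one hr.le hr1' (hNmax i)
              push_cast
              linarith
            have hprod : ((∏ i, (Mc j k i + 1) : ℕ) : ℝ) ≤
                (2:ℝ) ^ d * ∏ i, (r j k ^ (n i) / c j k) := by
              push_cast
              calc (∏ i, ((Mc j k i : ℝ) + 1)) ≤ ∏ i, (2 * (r j k ^ (n i) / c j k)) := by
                    refine Finset.prod_le_prod (fun i _ => by positivity) fun i _ => ?_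
                    have := hfac i; push_cast at this; linarith
                _ = (2:ℝ) ^ d * ∏ i, (r j k ^ (n i) / c j k) := by
                    rw [Finset.prod_mul_distrib, Finset.prod_const]
                    simp
            have hprod2 : (∏ i, (r j k ^ (n i) / c j k)) * c j k ^ ((t:ℝ)) ≤
                r j k ^ ((s:ℝ)) := by
              have he1 : (∏ i, (r j k ^ (n i) / c j k)) = r j k ^ S / c j k ^ d := by
                rw [Finset.prod_div_distrib, Finset.prod_pow_eq_pow_sum, ← hS,
                  Finset.prod_const]
                simp
              rw [he1, hc_def]; dsimp only
              have key : r j k ^ S / (r j k ^ N) ^ d * ((r j k ^ N) ^ ((t:ℝ))) =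
                  r j k ^ ((S:ℝ) - (N * d : ℕ) + N * (t:ℝ)) := by
                rw [← pow_mul, ← Real.rpow_natCast (r j k) S,
                  ← Real.rpow_natCast (r j k) (N * d),
                  ← Real.rpow_natCast (r j k) N, ← Real.rpow_mul hr.le,
                  div_eq_mul_inv, ← Real.rpow_neg hr.le, ← Real.rpow_add hr,
                  ← Real.rpow_add hr]
                ring_nf
              rw [key]
              apply Real.rpow_le_rpow_of_exponent_ge hr hr1'
              push_cast
              nlinarith [hsle]
            calc ((∏ i, (Mc j k i + 1) : ℕ) : ℝ) * c j k ^ ((t:ℝ))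
                ≤ ((2:ℝ) ^ d * ∏ i, (r j k ^ (n i) / c j k)) * c j k ^ ((t:ℝ)) := by
                  have : (0:ℝ) ≤ c j k ^ ((t:ℝ)) := by positivity
                  nlinarith [hprod]
              _ = (2:ℝ) ^ d * ((∏ i, (r j k ^ (n i) / c j k)) * c j k ^ ((t:ℝ))) := by ring
              _ ≤ (2:ℝ) ^ d * (r j k ^ ((s:ℝ))) := by
                  have : (0:ℝ) ≤ (2:ℝ) ^ d := by positivity
                  nlinarith [hprod2]
    · -- U j k empty : every piece is empty
      have hzero : ∀ w : Fin d → ℕ, EMetric.diam (V j (k, w)) ^ ((t:ℝ)) = 0 := by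
        intro w
        have hVe : V j (k, w) = ∅ := by
          rw [hV_def]; dsimp only
          rw [if_neg (by intro hc; exact hne hc.1)]
        rw [hVe, EMetric.diam, EMetric.diam_empty, ENNReal.zero_rpow_of_pos ht0]
      simp only [hzero, tsum_zero]
      exact zero_le
  -- geometric ratio
  set q : ℝ≥0∞ := ENNReal.ofReal ((2⁻¹:ℝ) ^ ((s:ℝ))) with hq_def
  have hq1 : q < 1 := by
    rw [hq_def, ← ENNReal.ofReal_one]
    exact (ENNReal.ofReal_lt_ofReal_iff_of_nonneg (by positivity)).mpr
      (Real.rpow_lt_one (by norm_num) (by norm_num) hs0)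
  -- per-piece bound in terms of rhoDiam and geometric
  have hks : ∀ j k, ENNReal.ofReal (r j k ^ ((s:ℝ))) ≤
      ENNReal.ofReal ((2:ℝ) ^ ((s:ℝ))) * (rhoDiam d n (U j k) ^ ((s:ℝ)) + q ^ k) := by
    intro j k
    have hη0 : (0:ℝ) ≤ δ' j * 2⁻¹ ^ (k+1) := by positivity
    have h1 : r j k ^ ((s:ℝ)) ≤
        2 ^ ((s:ℝ)) * (D j k ^ ((s:ℝ)) + (δ' j * 2⁻¹ ^ (k+1)) ^ ((s:ℝ))) := by
      rw [hr_def]; dsimp only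
      exact rpow_add_le (hD0 j k) hη0 hs0.le
    have h2 : ENNReal.ofReal (D j k ^ ((s:ℝ))) = rhoDiam d n (U j k) ^ ((s:ℝ)) := by
      rcases eq_or_ne (rhoDiam d n (U j k)) 0 with h | h
      · have hD : D j k = 0 := by rw [hD_def]; dsimp only; rw [h]; simp
        rw [hD, Real.zero_rpow hs0.ne', h, ENNReal.zero_rpow_of_pos hs0]
        simp
      · have hDpos : 0 < D j k := by
          rw [hD_def]; dsimp only
          exact ENNReal.toReal_pos h (hDtop j k)
        rw [← ENNReal.ofReal_rpow_of_pos hDpos, hD_def]; dsimp only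
        rw [ENNReal.ofReal_toReal (hDtop j k)]
    have h3 : ENNReal.ofReal ((δ' j * 2⁻¹ ^ (k+1)) ^ ((s:ℝ))) ≤ q ^ k := by
      have hηle : δ' j * 2⁻¹ ^ (k+1) ≤ 2⁻¹ ^ k := by
        have hδ1 : δ' j ≤ 1 := le_trans (hδ'le j) (by norm_num)
        have hp : (2⁻¹:ℝ) ^ (k+1) ≤ 2⁻¹ ^ k :=
          pow_le_pow_of_le_one (by norm_num) (by norm_num) (by omega)
        have hp0 : (0:ℝ) ≤ (2⁻¹:ℝ) ^ (k+1) := by positivity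
        nlinarith
      have h4 : (δ' j * 2⁻¹ ^ (k+1)) ^ ((s:ℝ)) ≤ ((2⁻¹:ℝ) ^ k) ^ ((s:ℝ)) :=
        Real.rpow_le_rpow hη0 hηle hs0.le
      have h5 : ((2⁻¹:ℝ) ^ k) ^ ((s:ℝ)) = ((2⁻¹:ℝ) ^ ((s:ℝ))) ^ k := by
        rw [← Real.rpow_natCast ((2⁻¹:ℝ) ^ ((s:ℝ))) k, ← Real.rpow_natCast (2⁻¹:ℝ) k,
          ← Real.rpow_mul (by norm_num), ← Real.rpow_mul (by norm_num), mul_comm]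
      calc ENNReal.ofReal ((δ' j * 2⁻¹ ^ (k+1)) ^ ((s:ℝ)))
          ≤ ENNReal.ofReal (((2⁻¹:ℝ) ^ ((s:ℝ))) ^ k) :=
            ENNReal.ofReal_le_ofReal (h5 ▸ h4)
        _ = q ^ k := by rw [hq_def, ENNReal.ofReal_pow (by positivity)]
    calc ENNReal.ofReal (r j k ^ ((s:ℝ)))
        ≤ ENNReal.ofReal (2 ^ ((s:ℝ)) * (D j k ^ ((s:ℝ)) + (δ' j * 2⁻¹ ^ (k+1)) ^ ((s:ℝ)))) :=
          ENNReal.ofReal_le_ofReal h1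
      _ = ENNReal.ofReal (2 ^ ((s:ℝ))) *
            (ENNReal.ofReal (D j k ^ ((s:ℝ))) +
              ENNReal.ofReal ((δ' j * 2⁻¹ ^ (k+1)) ^ ((s:ℝ)))) := by
          rw [ENNReal.ofReal_mul (by positivity), ENNReal.ofReal_add (by positivity) (by positivity)]
      _ ≤ ENNReal.ofReal ((2:ℝ) ^ ((s:ℝ))) * (rhoDiam d n (U j k) ^ ((s:ℝ)) + q ^ k) := by
          rw [h2]
          exact mul_le_mul_right (add_le_add_right h3 _) _
  -- total bound
  set B : ℝ≥0∞ := ENNReal.ofReal ((2:ℝ) ^ d) *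
    (ENNReal.ofReal ((2:ℝ) ^ ((s:ℝ))) * ((M + 1) + (1 - q)⁻¹)) with hB_def
  have hB : B ≠ ⊤ := by
    rw [hB_def]
    apply ENNReal.mul_ne_top ENNReal.ofReal_ne_top
    apply ENNReal.mul_ne_top ENNReal.ofReal_ne_top
    apply ENNReal.add_ne_top.mpr
    constructor
    · exact ENNReal.add_ne_top.mpr ⟨hM, ENNReal.one_ne_top⟩
    · rw [Ne, ENNReal.inv_eq_top]
      exact (tsub_pos_of_lt hq1).ne'
  have htotal : ∀ j, (∑' p : ℕ × (Fin d → ℕ), EMetric.diam (V j p) ^ ((t:ℝ))) ≤ B := by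
    intro j
    calc (∑' p : ℕ × (Fin d → ℕ), EMetric.diam (V j p) ^ ((t:ℝ)))
        = ∑' (k : ℕ) (w : Fin d → ℕ), EMetric.diam (V j (k, w)) ^ ((t:ℝ)) :=
          ENNReal.tsum_prod (f := fun k w => EMetric.diam (V j (k, w)) ^ ((t:ℝ)))
      _ ≤ ∑' k : ℕ, ENNReal.ofReal ((2:ℝ) ^ d * r j k ^ ((s:ℝ))) :=
          ENNReal.tsum_le_tsum (hinner j)
      _ = ENNReal.ofReal ((2:ℝ) ^ d) * ∑' k : ℕ, ENNReal.ofReal (r j k ^ ((s:ℝ))) := by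
          simp_rw [ENNReal.ofReal_mul (by positivity : (0:ℝ) ≤ (2:ℝ) ^ d)]
          rw [ENNReal.tsum_mul_left]
      _ ≤ ENNReal.ofReal ((2:ℝ) ^ d) *
            ∑' k : ℕ, ENNReal.ofReal ((2:ℝ) ^ ((s:ℝ))) *
              (rhoDiam d n (U j k) ^ ((s:ℝ)) + q ^ k) := by
          exact mul_le_mul_right (ENNReal.tsum_le_tsum (hks j)) _
      _ = ENNReal.ofReal ((2:ℝ) ^ d) * (ENNReal.ofReal ((2:ℝ) ^ ((s:ℝ))) *
            ((∑' k : ℕ, rhoDiam d n (U j k) ^ ((s:ℝ))) + ∑' k : ℕ, q ^ k)) := by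
          rw [ENNReal.tsum_mul_left, ENNReal.tsum_add]
      _ ≤ B := by
          rw [hB_def]
          apply mul_le_mul_right
          apply mul_le_mul_right
          apply add_le_add
          · exact (hUsum j).le
          · rw [ENNReal.tsum_geometric]
  -- apply the Hausdorff measure comparison
  have hδ'tend : Filter.Tendsto δ' Filter.atTop (nhds 0) := by
    rw [hδ'_def]
    have := (tendsto_pow_atTop_nhds_zero_of_lt_one (by norm_num : (0:ℝ) ≤ 2⁻¹)
      (by norm_num : (2⁻¹:ℝ) < 1)).mul_const (4⁻¹:ℝ)
    rw [zero_mul] at this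
    exact this
  have hrtend : Filter.Tendsto (fun j => ENNReal.ofReal (2 * δ' j)) Filter.atTop (nhds 0) := by
    have h2 : Filter.Tendsto (fun j => 2 * δ' j) Filter.atTop (nhds (2 * 0)) :=
      hδ'tend.const_mul 2
    rw [mul_zero] at h2
    have h3 := ENNReal.tendsto_ofReal h2
    rw [ENNReal.ofReal_zero] at h3
    exact h3
  have hμle : μH[((t:ℝ≥0):ℝ)] E ≤ B := by
    refine le_trans (Measure.hausdorffMeasure_le_liminf_tsum ((t:ℝ≥0):ℝ) E
      (fun j => ENNReal.ofReal (2 * δ' j)) hrtend V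
      (Filter.Eventually.of_forall fun j => fun p => hdiamV2 j p)
      (Filter.Eventually.of_forall hcoverV)) ?_
    exact Filter.liminf_le_of_frequently_le
      ((Filter.Eventually.of_forall htotal).frequently)
      (Filter.isBoundedUnder_of ⟨0, fun x => zero_le⟩)
  rw [hμ] at hμle
  exact hB (top_le_iff.mp hμle)

theorem stmt16 (d : ℕ) (hd : 0 < d) (n : Fin d → ℕ) (hn : ∀ i, 1 ≤ n i)
    (N S : ℕ) (hNmax : ∀ i, n i ≤ N) (hNmem : ∃ i, n i = N) (hS : S = ∑ i, n i)
    (E : Set (Fin d → ℝ)) :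
    (S : ℝ≥0∞) - ((d : ℝ≥0∞) - dimH E) * (N : ℝ≥0∞) ≤ rhoDimH d n E ∧
      rhoDimH d n E ≤ (S : ℝ≥0∞) := by
  have hupper : rhoDimH d n E ≤ (S : ℝ≥0∞) := by
    rw [rhoDimH]
    refine iSup₂_le fun σ hσ => ?_
    by_contra hlt
    push_neg at hlt
    have hSσ : (S : ℝ) < (σ : ℝ) := by exact_mod_cast hlt
    exact rhoHaus_ne_top_of_S_lt hd hn hS hSσ E hσ
  refine ⟨?_, hupper⟩
  -- basic numerics
  obtain ⟨i0, hi0⟩ := hNmem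
  have hN1 : 1 ≤ N := hi0 ▸ hn i0
  have hSdN : S ≤ d * N := by
    rw [hS]
    calc ∑ i, n i ≤ ∑ _i : Fin d, N := Finset.sum_le_sum fun i _ => hNmax i
      _ = d * N := by simp [Finset.sum_const, mul_comm]
  have hDle : dimH E ≤ (d : ℝ≥0∞) := by
    refine le_trans (dimH_mono (Set.subset_univ E)) ?_
    rw [Real.dimH_univ_pi_fin d]
  have hDtop : dimH E ≠ ⊤ := ne_top_of_le_ne_top (ENNReal.natCast_ne_top d) hDle
  apply ENNReal.le_of_forall_nnreal_lt
  intro σ hσlt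
  rcases eq_or_ne σ 0 with hσ0 | hσ0
  · simp [hσ0]
  have hσpos : 0 < (σ:ℝ) := by
    have : 0 < σ := pos_iff_ne_zero.mpr hσ0
    exact_mod_cast this
  set c : ℝ≥0∞ := ((d : ℝ≥0∞) - dimH E) * (N : ℝ≥0∞) with hc_def
  have hc_top : c ≠ ⊤ := by
    rw [hc_def]
    exact ENNReal.mul_ne_top
      (ne_top_of_le_ne_top (ENNReal.natCast_ne_top d) tsub_le_self)
      (ENNReal.natCast_ne_top N)
  have h1 : (σ : ℝ≥0∞) + c < (S : ℝ≥0∞) := by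
    by_contra h
    push_neg at h
    exact absurd hσlt (not_lt.mpr (tsub_le_iff_right.mpr h))
  -- pass to reals
  set Dr : ℝ := (dimH E).toReal with hDr_def
  have hDrle : Dr ≤ d := by
    have := ENNReal.toReal_mono (ENNReal.natCast_ne_top d) hDle
    simpa using this
  have hreal : (σ : ℝ) + ((d : ℝ) - Dr) * N < S := by
    have h2 := (ENNReal.toReal_lt_toReal
      (ENNReal.add_ne_top.mpr ⟨ENNReal.coe_ne_top, hc_top⟩)
      (ENNReal.natCast_ne_top S)).mpr h1
    rw [ENNReal.toReal_add ENNReal.coe_ne_top hc_top, hc_def, ENNReal.toReal_mul,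
      ENNReal.toReal_sub_of_le hDle (ENNReal.natCast_ne_top d)] at h2
    simpa using h2
  have hN0 : (0:ℝ) < N := by exact_mod_cast hN1
  have hSdN' : (S:ℝ) ≤ (d:ℝ) * N := by exact_mod_cast hSdN
  have hDr0 : 0 < Dr := by nlinarith
  set tr : ℝ := max ((d:ℝ) - ((S:ℝ) - σ)/N) (Dr/2) with htr_def
  have htr_lt : tr < Dr := by
    apply max_lt
    · have h3 : ((d:ℝ) - Dr) * N < (S:ℝ) - σ := by linarith
      have h4 : (d:ℝ) - Dr < ((S:ℝ) - σ)/N := by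
        rw [lt_div_iff₀ hN0]; linarith
      linarith
    · linarith
  have htr_pos : 0 < tr := lt_of_lt_of_le (by linarith) (le_max_right _ _)
  set t' : ℝ≥0 := Real.toNNReal tr with ht'_def
  have ht'val : (t' : ℝ) = tr := Real.coe_toNNReal tr htr_pos.le
  have ht'0 : 0 < (t' : ℝ) := by rw [ht'val]; exact htr_pos
  have ht'd : (t' : ℝ≥0∞) < dimH E := by
    have heq : (t' : ℝ≥0∞) = ENNReal.ofReal tr := rfl
    rw [heq, ← ENNReal.ofReal_toReal hDtop, ← hDr_def]
    exact (ENNReal.ofReal_lt_ofReal_iff hDr0).mpr htr_lt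
  have hcond : (σ : ℝ) ≤ (S : ℝ) - ((d : ℝ) - t') * N := by
    rw [ht'val]
    have h5 : (d:ℝ) - ((S:ℝ) - σ)/N ≤ tr := le_max_left _ _
    have h6 : ((d:ℝ) - tr) * N ≤ (S:ℝ) - σ := by
      have h7 : (d:ℝ) - tr ≤ ((S:ℝ) - σ)/N := by linarith
      calc ((d:ℝ) - tr) * N ≤ (((S:ℝ) - σ)/N) * N := by nlinarith
        _ = (S:ℝ) - σ := by field_simp
    linarith
  have htop := rhoHaus_eq_top_of_lt hd hn hNmax hN1 hS ht'0 ht'd hσpos hcond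
  rw [rhoDimH]
  exact le_iSup₂ (f := fun s (_ : rhoHaus d n s E = ⊤) => (s : ℝ≥0∞)) σ htop

end
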